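/- Let K = K(N,D) be a connected fractal square with D ≠ {0,1,…,N−1}², and assume every loop in K⁽²⁾ is null-homotopic in K⁽²⁾ and every loop in K⁽³⁾ is null-homotopic in K⁽³⁾. Then for any distinct d, d' ∈ D, if the intersection (K⁽²⁾ + d) ∩ (K⁽²⁾ + d') is nonempty then it is connected. -/

import Mathlib

open Set Metric Topology Pointwise Filter

noncomputable section

abbrev Plane : Type := EuclideanSpace ℝ (Fin 2)

/-- The closed unit square `[0,1]²` in the plane. -/
def unitSq : Set Plane := {x | x 0 ∈ Icc (0:ℝ) 1 ∧ x 1 ∈ Icc (0:ℝ) 1}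

/-- The embedding of `ℤ²` into the plane. -/
def emb (d : ℤ × ℤ) : Plane := WithLp.toLp 2 ![(d.1 : ℝ), (d.2 : ℝ)]

/-- The `n`-th approximation `K⁽ⁿ⁾` of the fractal square:
`K⁽⁰⁾ = [0,1]²`, `K⁽ⁿ⁾ = ⋃_{d ∈ D} (K⁽ⁿ⁻¹⁾ + d) / N`. -/
def approx (N : ℕ) (D : Finset (ℤ × ℤ)) : ℕ → Set Plane
  | 0 => unitSq
  | n + 1 => ⋃ d ∈ D, (fun x => (N : ℝ)⁻¹ • (x + emb d)) '' approx N D n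

/-- The fractal square `K = K(N, D) = ⋂_{n ≥ 1} K⁽ⁿ⁾`. -/
def FS (N : ℕ) (D : Finset (ℤ × ℤ)) : Set Plane := ⋂ n : ℕ, approx N D (n + 1)

/-- The lattice `ℤ² ⊆ ℝ²`. -/
def lattice : Set Plane := Set.range emb

/-- `H = K + ℤ²`. -/
def orbitH (N : ℕ) (D : Finset (ℤ × ℤ)) : Set Plane := FS N D + lattice

/-- A digit set for order `N`: a subset of `{0, …, N-1}²` with at least two elements. -/
def IsDigitSet (N : ℕ) (D : Finset (ℤ × ℤ)) : Prop :=
  2 ≤ D.card ∧ ∀ d ∈ D, 0 ≤ d.1 ∧ d.1 ≤ (N : ℤ) - 1 ∧ 0 ≤ d.2 ∧ d.2 ≤ (N : ℤ) - 1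

/-- `X` has trivial fundamental group: every loop in `X` is null-homotopic. -/
def TrivialPi1 (X : Type) [TopologicalSpace X] : Prop :=
  ∀ (x : X) (γ : Path x x), Path.Homotopic γ (Path.refl x)

lemma ratio_re_pos' {u : ℂ} (h : ‖u - 1‖ < 1) : 0 < u.re := by
  have h2 : (‖u-1‖)^2 < 1 := by nlinarith [norm_nonneg (u-1)]
  rw [Complex.sq_norm, Complex.normSq_apply] at h2
  simp only [Complex.sub_re, Complex.sub_im, Complex.one_re, Complex.one_im, sub_zero] at h2
  nlinarith [sq_nonneg u.im]

lemma ratio_re_pos {z w : ℂ} (hw : w ≠ 0) (h : dist z w < ‖w‖) :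
    0 < (z / w).re := by
  apply ratio_re_pos'
  have : z / w - 1 = (z - w) / w := by field_simp
  rw [this, norm_div]
  rw [div_lt_one (norm_pos_iff.mpr hw)]
  rwa [Complex.dist_eq] at h

lemma angle_exists {x y : ℝ} (h : (x : Real.Angle) = y) : ∃ k : ℤ, x = y + 2*Real.pi*k := by
  rw [Real.Angle.angle_eq_iff_two_pi_dvd_sub] at h
  obtain ⟨k, hk⟩ := h
  exact ⟨k, by linarith⟩

lemma const_of_discrete_values {f : ℝ → ℝ} {u v c : ℝ} (huv : u ≤ v)
    (hf : ContinuousOn f (Icc u v))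
    (hval : ∀ x ∈ Icc u v, ∃ k : ℤ, f x = c + 2*Real.pi*k) : f u = f v := by
  have hu : u ∈ Icc u v := ⟨le_refl _, huv⟩
  have hv : v ∈ Icc u v := ⟨huv, le_refl _⟩
  obtain ⟨ku, hku⟩ := hval u hu
  obtain ⟨kv, hkv⟩ := hval v hv
  have key : ∀ a b : ℤ, a < b → ¬ (c + 2*Real.pi*a + Real.pi ∈ f '' Icc u v) := by
    intro a b hab hmem
    obtain ⟨x, hx, hfx⟩ := hmem
    obtain ⟨k, hk⟩ := hval x hx
    rw [hk] at hfx
    have : (2*(k - a) : ℝ) = 1 := by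
      have hpi := Real.pi_pos
      nlinarith [hfx]
    have : (2*(k - a) : ℤ) = 1 := by exact_mod_cast this
    omega
  rcases lt_trichotomy (f u) (f v) with h | h | h
  · exfalso
    have hkk : ku < kv := by
      rw [hku, hkv] at h
      have hpi := Real.pi_pos
      have : (ku:ℝ) < kv := by nlinarith
      exact_mod_cast this
    refine key ku kv hkk ?_
    apply intermediate_value_Icc huv hf
    constructor
    · rw [hku]; linarith [Real.pi_pos]
    · rw [hkv]
      have : (ku:ℝ) + 1 ≤ kv := by exact_mod_cast hkk
      nlinarith [Real.pi_pos]
  · exact h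
  · exfalso
    have hkk : kv < ku := by
      rw [hku, hkv] at h
      have hpi := Real.pi_pos
      have : (kv:ℝ) < ku := by nlinarith
      exact_mod_cast this
    refine key kv ku hkk ?_
    apply intermediate_value_Icc' huv hf
    constructor
    · rw [hkv]; linarith [Real.pi_pos]
    · rw [hku]
      have : (kv:ℝ) + 1 ≤ ku := by exact_mod_cast hkk
      nlinarith [Real.pi_pos]

lemma arg_step_left {z₁ z₂ : ℂ} (h1 : z₁.re < 0) (h2 : z₂.re < 0) (hr : 0 < (z₂ / z₁).re) :
    (z₂ / z₁).arg = ((-z₂).arg + Real.pi) - ((-z₁).arg + Real.pi) := by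
  have hz1 : z₁ ≠ 0 := fun h => by simp [h] at h1
  have hz2 : z₂ ≠ 0 := fun h => by simp [h] at h2
  have hang : ((z₂ / z₁).arg : Real.Angle) =
      ((((-z₂).arg + Real.pi) - ((-z₁).arg + Real.pi) : ℝ) : Real.Angle) := by
    rw [Complex.arg_div_coe_angle hz2 hz1]
    have e2 := Complex.arg_neg_coe_angle hz2
    have e1 := Complex.arg_neg_coe_angle hz1
    push_cast [Real.Angle.coe_sub, Real.Angle.coe_add]
    rw [e1, e2]
    abel
  obtain ⟨k, hk⟩ := angle_exists hang
  have b1 : |(-z₁).arg| < Real.pi / 2 :=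
    Complex.abs_arg_lt_pi_div_two_iff.mpr (Or.inl (by simpa using h1))
  have b2 : |(-z₂).arg| < Real.pi / 2 :=
    Complex.abs_arg_lt_pi_div_two_iff.mpr (Or.inl (by simpa using h2))
  have br : |(z₂ / z₁).arg| < Real.pi / 2 :=
    Complex.abs_arg_lt_pi_div_two_iff.mpr (Or.inl hr)
  have hpi := Real.pi_pos
  have : k = 0 := by
    rcases abs_lt.mp b1 with ⟨c1, c2⟩
    rcases abs_lt.mp b2 with ⟨c3, c4⟩
    rcases abs_lt.mp br with ⟨c5, c6⟩
    have bnd : |2*Real.pi*(k:ℝ)| < 2*Real.pi := by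
      have : 2*Real.pi*(k:ℝ) = (z₂ / z₁).arg - (((-z₂).arg + Real.pi) - ((-z₁).arg + Real.pi)) := by
        rw [hk]; ring
      rw [this, abs_lt]
      constructor <;> nlinarith
    have habs : |(k:ℝ)| < 1 := by
      rw [abs_mul, abs_of_pos (by positivity : (0:ℝ) < 2*Real.pi)] at bnd
      nlinarith [abs_nonneg ((k:ℝ))]
    have : ((|k| : ℤ) : ℝ) < 1 := by push_cast; exact habs
    have : |k| < 1 := by exact_mod_cast this
    exact Int.abs_lt_one_iff.mp this
  rw [this] at hk
  push_cast at hk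
  linarith

lemma arg_step_offaxis {g : ℝ → ℂ} {u v : ℝ} (huv : u ≤ v) (hg : ContinuousOn g (Icc u v))
    (hoff : ∀ t ∈ Icc u v, g t ∈ Complex.slitPlane)
    (hr : ∀ t ∈ Icc u v, 0 < (g t / g u).re) :
    (g v).arg = (g u).arg + (g v / g u).arg := by
  have hne : ∀ t ∈ Icc u v, g t ≠ 0 := fun t ht => Complex.slitPlane_ne_zero (hoff t ht)
  have hu : u ∈ Icc u v := ⟨le_refl _, huv⟩
  set f : ℝ → ℝ := fun t => (g t).arg - (g t / g u).arg with hf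
  have hcont : ContinuousOn f (Icc u v) := by
    apply ContinuousOn.sub
    · intro t ht
      exact (Complex.continuousAt_arg (hoff t ht)).comp_continuousWithinAt (hg t ht)
    · intro t ht
      have hratio : ContinuousWithinAt (fun t => g t / g u) (Icc u v) t :=
        (hg t ht).div continuousWithinAt_const (hne u hu)
      have : (g t / g u) ∈ Complex.slitPlane := Or.inl (hr t ht)
      exact ContinuousAt.comp_continuousWithinAt (f := fun t => g t / g u)
        (Complex.continuousAt_arg this) hratio
  have hval : ∀ t ∈ Icc u v, ∃ k : ℤ, f t = (g u).arg + 2*Real.pi*k := by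
    intro t ht
    apply angle_exists
    show ((((g t).arg - (g t / g u).arg : ℝ)) : Real.Angle) = _
    rw [Real.Angle.coe_sub, Complex.arg_div_coe_angle (hne t ht) (hne u hu)]
    abel
  have := const_of_discrete_values huv hcont hval
  have hfu : f u = (g u).arg := by
    simp [hf, div_self (hne u hu)]
  rw [hfu] at this
  rw [hf] at this
  simp only at this
  linarith


lemma W0 (H : ℝ × ℝ → ℂ) (hH : Continuous H) (hne : ∀ p, H p ≠ 0)
    (h01 : ∀ s, H (s, 0) = H (0, 0)) (h11 : ∀ s, H (s, 1) = H (0, 0))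
    (hconst : ∀ t, H (1, t) = H (0, 0))
    (hfirst : ∀ t ∈ Icc (0:ℝ) (1/2), (H (0, t)).re < 0)
    (hsecond : ∀ t ∈ Icc (1/2:ℝ) 1, (H (0, t)).im = 0 → 0 < (H (0, t)).re)
    (him0 : (H (0, 0)).im < 0) (himm : 0 < (H (0, 1/2)).im) : False := by
  classical
  have hpi := Real.pi_pos
  set K : Set (ℝ × ℝ) := (Icc (0:ℝ) 1) ×ˢ (Icc (0:ℝ) 1) with hKdef
  have hKc : IsCompact K := isCompact_Icc.prod isCompact_Icc
  have hKne : K.Nonempty := ⟨(0, 0), ⟨⟨le_refl _, zero_le_one⟩, ⟨le_refl _, zero_le_one⟩⟩⟩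
  obtain ⟨p₀, hp₀K, hp₀⟩ :=
    hKc.exists_isMinOn hKne ((continuous_norm.comp hH).continuousOn)
  set m₀ := ‖H p₀‖ with hm₀def
  have hm₀pos : 0 < m₀ := norm_pos_iff.mpr (hne p₀)
  have hUC := hKc.uniformContinuousOn_of_continuous hH.continuousOn
  rw [Metric.uniformContinuousOn_iff] at hUC
  obtain ⟨δ, hδpos, hδ⟩ := hUC m₀ hm₀pos
  obtain ⟨n', hn'⟩ := exists_nat_gt (1/δ)
  have hn'pos : 0 < (n' : ℝ) := lt_trans (by positivity) hn'
  have hn'r : (0:ℝ) < 2 * n' := by linarith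
  have hinv : (1:ℝ)/(2*(n':ℝ)) < δ := by
    rw [div_lt_iff₀ hn'r]
    rw [div_lt_iff₀ hδpos] at hn'
    nlinarith
  set t : ℕ → ℝ := fun k => (k : ℝ) / (2 * n') with htdef
  have ht0 : t 0 = 0 := by simp [htdef]
  have htn : t (2 * n') = 1 := by
    show ((2 * n' : ℕ) : ℝ) / (2 * n') = 1
    push_cast
    exact div_self hn'r.ne'
  have htn' : t n' = 1/2 := by
    show ((n' : ℕ) : ℝ) / (2 * n') = 1/2
    rw [div_eq_div_iff hn'r.ne' (by norm_num)]
    ring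
  have htmem : ∀ k, k ≤ 2 * n' → t k ∈ Icc (0:ℝ) 1 := by
    intro k hk
    constructor
    · positivity
    · show (k : ℝ) / (2 * n') ≤ 1
      rw [div_le_one hn'r]
      have : (k:ℝ) ≤ ((2*n' : ℕ) : ℝ) := by exact_mod_cast hk
      push_cast at this; linarith
  have htdiff : ∀ k, t (k+1) - t k = 1/(2*(n':ℝ)) := by
    intro k
    show ((k+1 : ℕ) : ℝ) / (2 * n') - (k : ℝ) / (2 * n') = 1/(2*(n':ℝ))
    push_cast; field_simp; ring
  have htmono : ∀ k, t k ≤ t (k+1) := by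
    intro k
    have h1 := htdiff k
    have h2 : (0:ℝ) < 1/(2*(n':ℝ)) := by positivity
    linarith
  have hstep : ∀ s ∈ Icc (0:ℝ) 1, ∀ u ∈ Icc (0:ℝ) 1, ∀ v ∈ Icc (0:ℝ) 1,
      |u - v| < δ → 0 < (H (s, u) / H (s, v)).re := by
    intro s hs u hu v hv huv
    apply ratio_re_pos (hne _)
    have hdist : dist ((s,u) : ℝ × ℝ) (s,v) < δ := by
      rw [Prod.dist_eq]
      apply max_lt
      · simpa using hδpos
      · rwa [Real.dist_eq]
    have h1 : dist (H (s,u)) (H (s,v)) < m₀ := hδ (s,u) ⟨hs, hu⟩ (s,v) ⟨hs, hv⟩ hdist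
    exact lt_of_lt_of_le h1 (isMinOn_iff.mp hp₀ (s,v) ⟨hs, hv⟩)
  set wsum : ℝ → ℕ → ℝ :=
    fun s M => ∑ k ∈ Finset.range M, (H (s, t (k+1)) / H (s, t k)).arg with hwsumdef
  have claimExp : ∀ s M, ∃ ρ : ℝ, 0 < ρ ∧
      H (s, t M) = (ρ:ℂ) * H (s, t 0) * Complex.exp ((wsum s M : ℝ) * Complex.I) := by
    intro s M
    induction M with
    | zero => exact ⟨1, one_pos, by simp [hwsumdef]⟩
    | succ M ih =>
      obtain ⟨ρ, hρpos, hρ⟩ := ih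
      set r := H (s, t (M+1)) / H (s, t M) with hrdef
      have hrne : r ≠ 0 := div_ne_zero (hne _) (hne _)
      have hsplit : H (s, t (M+1)) = r * H (s, t M) :=
        (div_mul_cancel₀ _ (hne _)).symm
      have hr2 : (‖r‖ : ℂ) * Complex.exp ((r.arg : ℝ) * Complex.I) = r :=
        Complex.norm_mul_exp_arg_mul_I r
      have hw : wsum s (M+1) = wsum s M + r.arg := by
        simp [hwsumdef, Finset.sum_range_succ, hrdef]
      refine ⟨‖r‖ * ρ, mul_pos (norm_pos_iff.mpr hrne) hρpos, ?_⟩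
      calc H (s, t (M+1)) = r * H (s, t M) := hsplit
        _ = ((‖r‖ : ℂ) * Complex.exp ((r.arg : ℝ) * Complex.I)) *
            ((ρ:ℂ) * H (s, t 0) * Complex.exp ((wsum s M : ℝ) * Complex.I)) := by
              rw [hr2, ← hρ]
        _ = ((‖r‖ * ρ : ℝ) : ℂ) * H (s, t 0) *
            Complex.exp (((wsum s M + r.arg : ℝ)) * Complex.I) := by
              push_cast
              rw [add_mul, Complex.exp_add]
              ring
        _ = _ := by rw [← hw]
  have hval : ∀ s ∈ Icc (0:ℝ) 1, ∃ k : ℤ, wsum s (2*n') = 0 + 2*Real.pi*k := by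
    intro s _
    obtain ⟨ρ, hρpos, hρ⟩ := claimExp s (2*n')
    rw [htn, ht0, h11 s, h01 s] at hρ
    have hH00 : H (0,0) ≠ 0 := hne _
    have h1 : (ρ:ℂ) * Complex.exp ((wsum s (2*n') : ℝ) * Complex.I) = 1 := by
      apply mul_right_cancel₀ hH00
      rw [one_mul]
      linear_combination -hρ
    have hρ1 : ρ = 1 := by
      have h2 := congrArg norm h1
      rw [norm_mul, Complex.norm_exp_ofReal_mul_I, Complex.norm_real, Real.norm_eq_abs,
        abs_of_pos hρpos, mul_one, norm_one] at h2
      exact h2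
    rw [hρ1, Complex.ofReal_one, one_mul] at h1
    obtain ⟨k, hk⟩ := Complex.exp_eq_one_iff.mp h1
    refine ⟨k, ?_⟩
    have hc : ((wsum s (2*n') : ℝ) : ℂ) = (k:ℂ) * (2*(Real.pi:ℝ)) := by
      apply mul_right_cancel₀ Complex.I_ne_zero
      rw [hk]; push_cast; ring
    have : (wsum s (2*n') : ℝ) = (k:ℝ) * (2*Real.pi) := by exact_mod_cast hc
    linarith
  have hwcont : ContinuousOn (fun s => wsum s (2*n')) (Icc (0:ℝ) 1) := by
    apply continuousOn_finset_sum
    intro k hk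
    have hk2 : k + 1 ≤ 2*n' := Finset.mem_range.mp hk
    have hratio : Continuous (fun s => H (s, t (k+1)) / H (s, t k)) := by
      apply Continuous.div
      · exact hH.comp (continuous_id.prodMk continuous_const)
      · exact hH.comp (continuous_id.prodMk continuous_const)
      · intro s; exact hne _
    intro s hs
    have hsl : (fun s => H (s, t (k+1)) / H (s, t k)) s ∈ Complex.slitPlane := by
      apply Or.inl
      apply hstep s hs _ (htmem _ hk2) _ (htmem _ (by omega))
      rw [htdiff k, abs_of_pos (by positivity)]; exact hinv
    exact ContinuousAt.comp_continuousWithinAt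
      (f := fun s => H (s, t (k+1)) / H (s, t k))
      (Complex.continuousAt_arg hsl) hratio.continuousWithinAt
  have hw01 : wsum 0 (2*n') = wsum 1 (2*n') :=
    const_of_discrete_values zero_le_one hwcont hval
  have hw1 : wsum 1 (2*n') = 0 := by
    simp only [hwsumdef]
    apply Finset.sum_eq_zero
    intro k _
    rw [hconst, hconst, div_self (hne _), Complex.arg_one]
  have hn'2 : n' ≤ 2*n' := by omega
  have hfirstHalf : ∀ M, M ≤ n' → wsum 0 M =
      ((-(H (0, t M))).arg + Real.pi) - ((-(H (0, t 0))).arg + Real.pi) := by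
    intro M hM
    induction M with
    | zero => simp [hwsumdef]
    | succ M ih =>
      have hM' : M ≤ n' := by omega
      have hre : ∀ L, L ≤ n' → (H (0, t L)).re < 0 := by
        intro L hL
        apply hfirst
        refine ⟨(htmem L (by omega)).1, ?_⟩
        rw [← htn']
        show (L : ℝ) / (2 * n') ≤ (n' : ℝ) / (2 * n')
        rw [div_le_div_iff_of_pos_right hn'r]
        exact_mod_cast hL
      have hr : 0 < ((H (0, t (M+1))) / (H (0, t M))).re := by
        apply hstep 0 ⟨le_refl _, zero_le_one⟩ _ (htmem _ (by omega)) _ (htmem _ (by omega))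
        rw [htdiff M, abs_of_pos (by positivity)]; exact hinv
      have hstep' := arg_step_left (hre M hM') (hre (M+1) hM) hr
      have hsum : wsum 0 (M+1) = wsum 0 M + ((H (0, t (M+1))) / (H (0, t M))).arg := by
        simp [hwsumdef, Finset.sum_range_succ]
      rw [hsum, ih hM', hstep']
      ring
  have hsecondHalf : ∀ M, n' ≤ M → M ≤ 2*n' →
      (∑ k ∈ Finset.Ico n' M, (H (0, t (k+1)) / H (0, t k)).arg) =
        (H (0, t M)).arg - (H (0, t n')).arg := by
    intro M hM1 hM2
    induction M, hM1 using Nat.le_induction with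
    | base => simp
    | succ M hM ih =>
      have hM2' : M ≤ 2*n' := by omega
      have hsub : Icc (t M) (t (M+1)) ⊆ Icc (1/2 : ℝ) 1 := by
        intro τ hτ
        constructor
        · refine le_trans ?_ hτ.1
          rw [← htn']
          show (n' : ℝ) / (2 * n') ≤ (M : ℝ) / (2 * n')
          rw [div_le_div_iff_of_pos_right hn'r]
          exact_mod_cast hM
        · exact le_trans hτ.2 (htmem (M+1) (by omega)).2
      have hsub01 : Icc (t M) (t (M+1)) ⊆ Icc (0:ℝ) 1 := by
        intro τ hτ
        exact ⟨le_trans (htmem M (by omega)).1 hτ.1, le_trans hτ.2 (htmem (M+1) (by omega)).2⟩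
      have harg := arg_step_offaxis (g := fun τ => H (0, τ)) (htmono M)
        ((hH.comp (continuous_const.prodMk continuous_id)).continuousOn)
        (fun τ hτ => by
          rcases eq_or_ne (H (0, τ)).im 0 with h | h
          · exact Or.inl (hsecond τ (hsub hτ) h)
          · exact Or.inr h)
        (fun τ hτ => by
          apply hstep 0 ⟨le_refl _, zero_le_one⟩ _ (hsub01 hτ) _ (htmem M (by omega))
          have h1 : 0 ≤ τ - t M := by linarith [hτ.1]
          have h2 : τ - t M ≤ 1/(2*(n':ℝ)) := by
            have := htdiff M; linarith [hτ.2]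
          rw [abs_of_nonneg h1]
          rcases lt_or_eq_of_le h2 with h3 | h3
          · linarith
          · rw [h3]; exact hinv)
      rw [Finset.sum_Ico_succ_top hM, ih hM2', harg]
      ring
  have hcomb := Finset.sum_Ico_consecutive
    (f := fun k => (H (0, t (k+1)) / H (0, t k)).arg) (Nat.zero_le n') hn'2
  rw [← Finset.range_eq_Ico, ← Finset.range_eq_Ico] at hcomb
  have hw0 : wsum 0 (2*n') = wsum 0 n' +
      ∑ k ∈ Finset.Ico n' (2*n'), (H (0, t (k+1)) / H (0, t k)).arg := hcomb.symm
  rw [hfirstHalf n' (le_refl _), hsecondHalf (2*n') hn'2 (le_refl _)] at hw0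
  rw [htn, htn', ht0, h11 0] at hw0
  have e1 : (-(H (0, 1/2))).arg = (H (0, 1/2)).arg - Real.pi :=
    Complex.arg_neg_eq_arg_sub_pi_of_im_pos himm
  have e2 : (-(H (0, 0))).arg = (H (0, 0)).arg + Real.pi :=
    Complex.arg_neg_eq_arg_add_pi_of_im_neg him0
  rw [e1, e2, hw01, hw1] at hw0
  linarith


/-! ### Coordinate utilities -/

def dz (d : ℤ × ℤ) (k : Fin 2) : ℤ := if k = 0 then d.1 else d.2

lemma plane_add_apply (x y : Plane) (k : Fin 2) : (x + y) k = x k + y k := rfl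

lemma plane_smul_apply (c : ℝ) (x : Plane) (k : Fin 2) : (c • x) k = c * x k := rfl

lemma emb_apply (d : ℤ × ℤ) (k : Fin 2) : emb d k = (dz d k : ℝ) := by
  fin_cases k <;> simp [emb, dz]

lemma continuous_planeProj (k : Fin 2) : Continuous (fun x : Plane => x k) :=
  (EuclideanSpace.proj (𝕜 := ℝ) k).continuous

lemma plane_ext {x y : Plane} (h : ∀ k, x k = y k) : x = y := PiLp.ext h

lemma mem_unitSq {x : Plane} : x ∈ unitSq ↔ ∀ k, 0 ≤ x k ∧ x k ≤ 1 := by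
  simp only [unitSq, mem_setOf_eq, mem_Icc, Fin.forall_fin_two]

lemma fmap_apply (N : ℕ) (d : ℤ × ℤ) (y : Plane) (k : Fin 2) :
    ((N : ℝ)⁻¹ • (y + emb d)) k = (y k + (dz d k : ℝ))/(N:ℝ) := by
  rw [plane_smul_apply, plane_add_apply, emb_apply, div_eq_inv_mul]

lemma dz_bounds {N : ℕ} {D : Finset (ℤ × ℤ)} (hD : IsDigitSet N D) {d : ℤ × ℤ}
    (hd : d ∈ D) (k : Fin 2) : 0 ≤ dz d k ∧ dz d k ≤ (N:ℤ) - 1 := by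
  obtain ⟨h1, h2, h3, h4⟩ := hD.2 d hd
  unfold dz
  split <;> exact ⟨by assumption, by assumption⟩

lemma mem_approx_succ {N : ℕ} {D : Finset (ℤ × ℤ)} {n : ℕ} {x : Plane} :
    x ∈ approx N D (n+1) ↔ ∃ d ∈ D, ∃ y ∈ approx N D n, (N:ℝ)⁻¹ • (y + emb d) = x := by
  show x ∈ ⋃ d ∈ D, _ ↔ _
  simp only [mem_iUnion, mem_image, exists_prop]

lemma approx_succ_subset {N : ℕ} (hN : 2 ≤ N) {D : Finset (ℤ × ℤ)} (hD : IsDigitSet N D) :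
    ∀ n, approx N D (n+1) ⊆ approx N D n := by
  have hN0 : (0:ℝ) < N := by positivity
  intro n
  induction n with
  | zero =>
    intro x hx
    rw [mem_approx_succ] at hx
    obtain ⟨d, hd, y, hy, rfl⟩ := hx
    show _ ∈ unitSq
    rw [mem_unitSq]
    intro k
    rw [fmap_apply]
    have hy' := (mem_unitSq.mp hy) k
    obtain ⟨hdz1, hdz2⟩ := dz_bounds hD hd k
    have c1 : (0:ℝ) ≤ (dz d k : ℝ) := by exact_mod_cast hdz1
    have c2 : (dz d k : ℝ) ≤ (N:ℝ) - 1 := by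
      have : ((dz d k : ℤ) : ℝ) ≤ (((N:ℤ) - 1 : ℤ) : ℝ) := by exact_mod_cast hdz2
      push_cast at this; linarith
    constructor
    · exact div_nonneg (by linarith [hy'.1]) hN0.le
    · rw [div_le_one hN0]; linarith [hy'.2]
  | succ n ih =>
    intro x hx
    rw [mem_approx_succ] at hx ⊢
    obtain ⟨d, hd, y, hy, rfl⟩ := hx
    exact ⟨d, hd, y, ih hy, rfl⟩

lemma approx_subset_unitSq {N : ℕ} (hN : 2 ≤ N) {D : Finset (ℤ × ℤ)} (hD : IsDigitSet N D) :
    ∀ n, approx N D n ⊆ unitSq := by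
  intro n
  induction n with
  | zero => exact fun x hx => hx
  | succ n ih => exact fun x hx => ih (approx_succ_subset hN hD n hx)

/-! ### Cell structure of `approx N D 2` -/

def cellOf (N : ℕ) (v : Fin 2 → ℤ) : Set Plane :=
  {x | ∀ k, (v k : ℝ)/(N:ℝ)^2 ≤ x k ∧ x k ≤ ((v k : ℝ)+1)/(N:ℝ)^2}

def vde (N : ℕ) (d e : ℤ × ℤ) (k : Fin 2) : ℤ := N * dz d k + dz e k

lemma approx2_eq (N : ℕ) (hN : 2 ≤ N) (D : Finset (ℤ × ℤ)) :
    approx N D 2 = ⋃ d ∈ D, ⋃ e ∈ D, cellOf N (vde N d e) := by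
  have hN0 : (0:ℝ) < N := by positivity
  have hN2 : (0:ℝ) < (N:ℝ)^2 := by positivity
  have key : ∀ (Yk Bk Ak : ℝ), (((Yk + Bk)/(N:ℝ)) + Ak)/(N:ℝ) = (Yk + ((N:ℝ)*Ak+Bk))/(N:ℝ)^2 := by
    intro Yk Bk Ak; field_simp; ring
  ext x
  simp only [mem_iUnion, exists_prop]
  constructor
  · intro hx
    rw [mem_approx_succ] at hx
    obtain ⟨d, hd, z, hz, rfl⟩ := hx
    rw [mem_approx_succ] at hz
    obtain ⟨e, he, y, hy, rfl⟩ := hz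
    refine ⟨d, hd, e, he, fun k => ?_⟩
    rw [fmap_apply, fmap_apply, key]
    have hy' := (mem_unitSq.mp hy) k
    unfold vde
    push_cast
    rw [div_le_div_iff_of_pos_right hN2, div_le_div_iff_of_pos_right hN2]
    constructor <;> linarith [hy'.1, hy'.2]
  · rintro ⟨d, hd, e, he, hx⟩
    rw [mem_approx_succ]
    set y : Plane := WithLp.toLp 2 (fun k => (N:ℝ)^2 * x k - ((N:ℝ) * (dz d k : ℝ) + (dz e k : ℝ))) with hydef
    have hyk : ∀ k, y k = (N:ℝ)^2 * x k - ((N:ℝ) * (dz d k : ℝ) + (dz e k : ℝ)) := fun k => rfl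
    have hy : y ∈ unitSq := by
      rw [mem_unitSq]
      intro k
      have h1 := (hx k).1
      have h2 := (hx k).2
      unfold vde at h1 h2
      push_cast at h1 h2
      rw [div_le_iff₀ hN2] at h1
      rw [le_div_iff₀ hN2] at h2
      rw [hyk]
      constructor <;> nlinarith
    refine ⟨d, hd, (N:ℝ)⁻¹ • (y + emb e), ?_, ?_⟩
    · rw [mem_approx_succ]
      exact ⟨e, he, y, hy, rfl⟩
    · apply plane_ext
      intro k
      rw [fmap_apply, fmap_apply, key, hyk]
      field_simp; ring

lemma cellOf_subset_approx2 {N : ℕ} (hN : 2 ≤ N) {D : Finset (ℤ × ℤ)} {d e : ℤ × ℤ}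
    (hd : d ∈ D) (he : e ∈ D) : cellOf N (vde N d e) ⊆ approx N D 2 := by
  rw [approx2_eq N hN D]
  intro x hx
  simp only [mem_iUnion, exists_prop]
  exact ⟨d, hd, e, he, hx⟩

lemma cellOf_closed (N : ℕ) (v : Fin 2 → ℤ) : IsClosed (cellOf N v) := by
  have : cellOf N v = ⋂ k : Fin 2,
      ((fun x : Plane => x k) ⁻¹' Icc ((v k : ℝ)/(N:ℝ)^2) (((v k : ℝ)+1)/(N:ℝ)^2)) := by
    ext x; simp [cellOf, mem_Icc, forall_and]
  rw [this]
  exact isClosed_iInter fun k => IsClosed.preimage (continuous_planeProj k) isClosed_Icc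

lemma cellOf_convex (N : ℕ) (v : Fin 2 → ℤ) : Convex ℝ (cellOf N v) := by
  intro x hx z hz α β hα hβ hαβ
  intro k
  have h1 := hx k
  have h2 := hz k
  have : (α • x + β • z) k = α * x k + β * z k := by
    rw [plane_add_apply, plane_smul_apply, plane_smul_apply]
  rw [this]
  have e3 : α*((v k : ℝ)/(N:ℝ)^2)+β*((v k : ℝ)/(N:ℝ)^2) = (v k : ℝ)/(N:ℝ)^2 := by
    rw [← add_mul, hαβ, one_mul]
  have e4 : α*(((v k : ℝ)+1)/(N:ℝ)^2)+β*(((v k : ℝ)+1)/(N:ℝ)^2) = ((v k : ℝ)+1)/(N:ℝ)^2 := by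
    rw [← add_mul, hαβ, one_mul]
  constructor
  · have e1 := mul_le_mul_of_nonneg_left h1.1 hα
    have e2 := mul_le_mul_of_nonneg_left h2.1 hβ
    linarith
  · have e1 := mul_le_mul_of_nonneg_left h1.2 hα
    have e2 := mul_le_mul_of_nonneg_left h2.2 hβ
    linarith

lemma approx2_closed {N : ℕ} (hN : 2 ≤ N) (D : Finset (ℤ × ℤ)) :
    IsClosed (approx N D 2) := by
  rw [approx2_eq N hN D]
  apply Set.Finite.isClosed_biUnion D.finite_toSet
  intro d _
  apply Set.Finite.isClosed_biUnion D.finite_toSet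
  intro e _
  exact cellOf_closed N _

/-! ### FS facts and connectivity -/

lemma FS_subset_approx (N : ℕ) (D : Finset (ℤ × ℤ)) (n : ℕ) :
    FS N D ⊆ approx N D (n+1) := iInter_subset _ n

lemma FS_subset_approx' {N : ℕ} (hN : 2 ≤ N) {D : Finset (ℤ × ℤ)} (hD : IsDigitSet N D) :
    ∀ n, FS N D ⊆ approx N D n
  | 0 => (FS_subset_approx N D 0).trans (approx_succ_subset hN hD 0)
  | n+1 => FS_subset_approx N D n

lemma fmap_mem_FS {N : ℕ} (hN : 2 ≤ N) {D : Finset (ℤ × ℤ)} (hD : IsDigitSet N D)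
    {d : ℤ × ℤ} (hd : d ∈ D) {x : Plane} (hx : x ∈ FS N D) :
    (N:ℝ)⁻¹ • (x + emb d) ∈ FS N D := by
  rw [FS, mem_iInter]
  intro n
  rw [mem_approx_succ]
  exact ⟨d, hd, x, FS_subset_approx' hN hD n hx, rfl⟩

lemma cell_meets_FS {N : ℕ} (hN : 2 ≤ N) {D : Finset (ℤ × ℤ)} (hD : IsDigitSet N D)
    (hne : (FS N D).Nonempty) {d e : ℤ × ℤ} (hd : d ∈ D) (he : e ∈ D) :
    ((cellOf N (vde N d e)) ∩ FS N D).Nonempty := by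
  have hN0 : (0:ℝ) < N := by positivity
  have hN2 : (0:ℝ) < (N:ℝ)^2 := by positivity
  obtain ⟨z, hz⟩ := hne
  refine ⟨(N:ℝ)⁻¹ • (((N:ℝ)⁻¹ • (z + emb e)) + emb d), ?_, ?_⟩
  · intro k
    rw [fmap_apply, fmap_apply]
    have key : (((z k + (dz e k : ℝ))/(N:ℝ)) + (dz d k : ℝ))/(N:ℝ)
        = (z k + ((N:ℝ)*(dz d k : ℝ)+(dz e k : ℝ)))/(N:ℝ)^2 := by
      field_simp; ring
    rw [key]
    have hz' := (mem_unitSq.mp (approx_subset_unitSq hN hD 1 (FS_subset_approx N D 0 hz))) k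
    unfold vde
    push_cast
    rw [div_le_div_iff_of_pos_right hN2, div_le_div_iff_of_pos_right hN2]
    constructor <;> linarith [hz'.1, hz'.2]
  · exact fmap_mem_FS hN hD hd (fmap_mem_FS hN hD he hz)

lemma approx2_preconnected {N : ℕ} (hN : 2 ≤ N) {D : Finset (ℤ × ℤ)} (hD : IsDigitSet N D)
    (hconn : IsConnected (FS N D)) : IsPreconnected (approx N D 2) := by
  obtain ⟨x₀, hx₀⟩ := hconn.nonempty
  set c : Set (Set Plane) :=
    (fun p : (ℤ×ℤ)×(ℤ×ℤ) => cellOf N (vde N p.1 p.2) ∪ FS N D) ''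
      {p | p.1 ∈ D ∧ p.2 ∈ D} with hcdef
  have hEq : approx N D 2 = ⋃₀ c := by
    apply subset_antisymm
    · intro x hx
      rw [approx2_eq N hN D] at hx
      simp only [mem_iUnion, exists_prop] at hx
      obtain ⟨d, hd, e, he, hx⟩ := hx
      exact ⟨cellOf N (vde N d e) ∪ FS N D, ⟨(d,e), ⟨hd, he⟩, rfl⟩, Or.inl hx⟩
    · apply sUnion_subset
      rintro s ⟨p, hp, rfl⟩
      apply union_subset
      · exact cellOf_subset_approx2 hN hp.1 hp.2
      · exact FS_subset_approx N D 1
  rw [hEq]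
  apply isPreconnected_sUnion x₀ c
  · rintro s ⟨p, hp, rfl⟩
    exact Or.inr hx₀
  · rintro s ⟨p, hp, rfl⟩
    obtain ⟨w, hwc, hwF⟩ := cell_meets_FS hN hD hconn.nonempty hp.1 hp.2
    exact IsPreconnected.union w hwc hwF ((cellOf_convex N _).isPreconnected)
      hconn.isPreconnected

lemma approx2_joinedIn {N : ℕ} (hN : 2 ≤ N) {D : Finset (ℤ × ℤ)} (hD : IsDigitSet N D)
    (hconn : IsConnected (FS N D)) {x y : Plane}
    (hx : x ∈ approx N D 2) (hy : y ∈ approx N D 2) : JoinedIn (approx N D 2) x y := by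
  classical
  set Q := approx N D 2 with hQdef
  set T : Set Plane := {z | JoinedIn Q x z} with hTdef
  have key : ∀ p : (ℤ×ℤ)×(ℤ×ℤ), p.1 ∈ D → p.2 ∈ D →
      (cellOf N (vde N p.1 p.2) ∩ T).Nonempty → cellOf N (vde N p.1 p.2) ⊆ T := by
    rintro p hp1 hp2 ⟨w, hwc, hwT⟩ z hz
    have hpc : IsPathConnected (cellOf N (vde N p.1 p.2)) :=
      (cellOf_convex N _).isPathConnected ⟨w, hwc⟩
    exact hwT.trans ((hpc.joinedIn w hwc z hz).mono (cellOf_subset_approx2 hN hp1 hp2))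
  by_contra hyT
  set S1 : Set ((ℤ×ℤ)×(ℤ×ℤ)) :=
    {p | (p.1 ∈ D ∧ p.2 ∈ D) ∧ (cellOf N (vde N p.1 p.2) ∩ T).Nonempty} with hS1def
  set S2 : Set ((ℤ×ℤ)×(ℤ×ℤ)) :=
    {p | (p.1 ∈ D ∧ p.2 ∈ D) ∧ ¬(cellOf N (vde N p.1 p.2) ∩ T).Nonempty} with hS2def
  have hfin : ∀ (S : Set ((ℤ×ℤ)×(ℤ×ℤ))), S ⊆ {p | p.1 ∈ D ∧ p.2 ∈ D} → S.Finite := by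
    intro S hS
    apply Set.Finite.subset (Set.Finite.prod D.finite_toSet D.finite_toSet)
    intro p hp
    exact ⟨(hS hp).1, (hS hp).2⟩
  set u : Set Plane := ⋃ p ∈ S1, cellOf N (vde N p.1 p.2) with hudef
  set v : Set Plane := ⋃ p ∈ S2, cellOf N (vde N p.1 p.2) with hvdef
  have hcu : IsClosed u :=
    Set.Finite.isClosed_biUnion (hfin S1 (fun p hp => hp.1)) (fun p _ => cellOf_closed N _)
  have hcv : IsClosed v :=
    Set.Finite.isClosed_biUnion (hfin S2 (fun p hp => hp.1)) (fun p _ => cellOf_closed N _)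
  have hcover : Q ⊆ u ∪ v := by
    intro z hz
    rw [hQdef, approx2_eq N hN D] at hz
    simp only [mem_iUnion, exists_prop] at hz
    obtain ⟨d, hd, e, he, hz⟩ := hz
    by_cases hc : (cellOf N (vde N d e) ∩ T).Nonempty
    · exact Or.inl (mem_biUnion (show ((d,e) : (ℤ×ℤ)×(ℤ×ℤ)) ∈ S1 from ⟨⟨hd, he⟩, hc⟩) hz)
    · exact Or.inr (mem_biUnion (show ((d,e) : (ℤ×ℤ)×(ℤ×ℤ)) ∈ S2 from ⟨⟨hd, he⟩, hc⟩) hz)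
  have hxT : x ∈ T := JoinedIn.refl hx
  have hqu : (Q ∩ u).Nonempty := by
    have hx2 := hx
    rw [hQdef, approx2_eq N hN D] at hx2
    simp only [mem_iUnion, exists_prop] at hx2
    obtain ⟨d, hd, e, he, hx2⟩ := hx2
    exact ⟨x, hx, mem_biUnion (show ((d,e) : (ℤ×ℤ)×(ℤ×ℤ)) ∈ S1 from
      ⟨⟨hd, he⟩, ⟨x, hx2, hxT⟩⟩) hx2⟩
  have hqv : (Q ∩ v).Nonempty := by
    have hy2 := hy
    rw [hQdef, approx2_eq N hN D] at hy2
    simp only [mem_iUnion, exists_prop] at hy2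
    obtain ⟨d, hd, e, he, hy2⟩ := hy2
    have hnc : ¬(cellOf N (vde N d e) ∩ T).Nonempty := by
      intro hc
      exact hyT (key (d,e) hd he hc hy2)
    exact ⟨y, hy, mem_biUnion (show ((d,e) : (ℤ×ℤ)×(ℤ×ℤ)) ∈ S2 from ⟨⟨hd, he⟩, hnc⟩) hy2⟩
  obtain ⟨z, hzQ, hzu, hzv⟩ :=
    isPreconnected_closed_iff.mp (approx2_preconnected hN hD hconn) u v hcu hcv hcover hqu hqv
  simp only [hudef, hvdef, mem_iUnion, exists_prop] at hzu hzv
  obtain ⟨p, hpS1, hzp⟩ := hzu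
  obtain ⟨p', hpS2, hzp'⟩ := hzv
  have hzT : z ∈ T := key p hpS1.1.1 hpS1.1.2 hpS1.2 hzp
  exact hpS2.2 ⟨z, hzp', hzT⟩

/-! ### From a null-homotopy to the winding contradiction -/

lemma core2 {N : ℕ} (hN : 2 ≤ N) {D : Finset (ℤ × ℤ)}
    (h3 : TrivialPi1 (approx N D 3))
    {W S : Set Plane} {a b : Plane}
    (hscale : ∀ x ∈ W ∪ S, (N:ℝ)⁻¹ • x ∈ approx N D 3)
    (q1 : Path a b) (hq1 : range q1 ⊆ W) (q2 : Path b a) (hq2 : range q2 ⊆ S)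
    (φ : Plane → ℂ) (hφ : Continuous φ)
    (hφ0 : ∀ y ∈ approx N D 3, φ ((N:ℝ) • y) ≠ 0)
    (hW : ∀ x ∈ W, (φ x).re < 0)
    (hS : ∀ x ∈ S, (φ x).im = 0 → 0 < (φ x).re)
    (ha : (φ a).im < 0) (hb : 0 < (φ b).im) : False := by
  have hN0 : (N:ℝ) ≠ 0 := by positivity
  set γ : Path a a := q1.trans q2 with hγdef
  have hγmem : ∀ t : unitInterval, γ t ∈ W ∪ S := by
    intro t
    have : γ t ∈ range γ := mem_range_self t
    rw [hγdef, Path.trans_range] at this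
    rcases this with h | h
    · exact Or.inl (hq1 h)
    · exact Or.inr (hq2 h)
  set x₀ : ↥(approx N D 3) := ⟨(N:ℝ)⁻¹ • a, hscale a (Or.inl (hq1 ⟨0, q1.source⟩))⟩ with hx₀def
  set γ' : Path x₀ x₀ :=
    { toFun := fun t => ⟨(N:ℝ)⁻¹ • γ t, hscale _ (hγmem t)⟩
      continuous_toFun := by
        apply Continuous.subtype_mk
        exact (continuous_const_smul ((N:ℝ)⁻¹)).comp γ.continuous
      source' := by
        apply Subtype.ext
        simp [γ.source, hx₀def]
      target' := by
        apply Subtype.ext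
        simp [γ.target, hx₀def] } with hγ'def
  obtain ⟨F⟩ := h3 x₀ γ'
  set pr : ℝ → unitInterval := projIcc 0 1 zero_le_one with hprdef
  set H : ℝ × ℝ → ℂ := fun p => φ ((N:ℝ) • ((F (pr p.1, pr p.2) : ↥(approx N D 3)) : Plane))
    with hHdef
  have hsmul : ∀ z : ↥(approx N D 3), (N:ℝ) • ((N:ℝ)⁻¹ • (z : Plane)) = (z : Plane) := by
    intro z; rw [smul_inv_smul₀ hN0]
  have hγ'val : ∀ t, ((γ' t : ↥(approx N D 3)) : Plane) = (N:ℝ)⁻¹ • γ t := fun t => rfl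
  have hHcont : Continuous H := by
    apply hφ.comp
    apply (continuous_const_smul (N:ℝ)).comp
    apply Continuous.subtype_val
    exact F.continuous.comp ((continuous_projIcc.comp continuous_fst).prodMk
      (continuous_projIcc.comp continuous_snd))
  have hHne : ∀ p, H p ≠ 0 := by
    intro p
    exact hφ0 _ (F (pr p.1, pr p.2)).2
  have hF0 : ∀ s : unitInterval, F (s, 0) = x₀ := by
    intro s
    have := F.eq_fst s (show (0 : unitInterval) ∈ ({0, 1} : Set unitInterval) from Or.inl rfl)
    rw [this]
    show γ' 0 = x₀
    exact γ'.source
  have hF1 : ∀ s : unitInterval, F (s, 1) = x₀ := by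
    intro s
    have := F.eq_fst s (show (1 : unitInterval) ∈ ({0, 1} : Set unitInterval) from Or.inr rfl)
    rw [this]
    show γ' 1 = x₀
    exact γ'.target
  have hprval : ∀ t : ℝ, t ∈ Icc (0:ℝ) 1 → ((pr t : unitInterval) : ℝ) = t := by
    intro t ht
    rw [hprdef, Set.projIcc_of_mem zero_le_one ht]
  have hpr0 : pr 0 = 0 := Subtype.ext (hprval 0 ⟨le_refl _, zero_le_one⟩)
  have hpr1 : pr 1 = 1 := Subtype.ext (hprval 1 ⟨zero_le_one, le_refl _⟩)
  have hH00 : H (0, 0) = φ a := by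
    show φ ((N:ℝ) • ((F (pr 0, pr 0) : ↥(approx N D 3)) : Plane)) = φ a
    rw [hpr0, hF0 0, hx₀def]
    show φ ((N:ℝ) • ((N:ℝ)⁻¹ • a)) = φ a
    rw [smul_inv_smul₀ hN0]
  have h01 : ∀ s, H (s, 0) = H (0, 0) := by
    intro s
    rw [hH00]
    show φ ((N:ℝ) • ((F (pr s, pr 0) : ↥(approx N D 3)) : Plane)) = φ a
    rw [hpr0, hF0 (pr s), hx₀def]
    show φ ((N:ℝ) • ((N:ℝ)⁻¹ • a)) = φ a
    rw [smul_inv_smul₀ hN0]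
  have h11 : ∀ s, H (s, 1) = H (0, 0) := by
    intro s
    rw [hH00]
    show φ ((N:ℝ) • ((F (pr s, pr 1) : ↥(approx N D 3)) : Plane)) = φ a
    rw [hpr1, hF1 (pr s), hx₀def]
    show φ ((N:ℝ) • ((N:ℝ)⁻¹ • a)) = φ a
    rw [smul_inv_smul₀ hN0]
  have hconst : ∀ t, H (1, t) = H (0, 0) := by
    intro t
    rw [hH00]
    show φ ((N:ℝ) • ((F (pr 1, pr t) : ↥(approx N D 3)) : Plane)) = φ a
    rw [hpr1, F.apply_one]
    show φ ((N:ℝ) • ((N:ℝ)⁻¹ • a)) = φ a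
    rw [smul_inv_smul₀ hN0]
  have hH0t : ∀ t : ℝ, H (0, t) = φ (γ (pr t)) := by
    intro t
    show φ ((N:ℝ) • ((F (pr 0, pr t) : ↥(approx N D 3)) : Plane)) = _
    rw [hpr0, F.apply_zero]
    show φ ((N:ℝ) • ((N:ℝ)⁻¹ • γ (pr t))) = _
    rw [smul_inv_smul₀ hN0]
  have htrans1 : ∀ τ : unitInterval, (τ : ℝ) ≤ 1/2 → γ τ ∈ range q1 := by
    intro τ hτ
    rw [hγdef, Path.trans_apply]
    split
    · exact mem_range_self _
    · rename_i h; exact absurd hτ h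
  have hq1one : ∀ x : unitInterval, (x:ℝ) = 1 → q1 x = b := by
    intro x hx
    have : x = 1 := Subtype.ext hx
    rw [this]
    exact q1.target
  have htrans2 : ∀ τ : unitInterval, 1/2 ≤ (τ : ℝ) → γ τ ∈ range q2 ∪ ({b} : Set Plane) := by
    intro τ hτ
    rw [hγdef, Path.trans_apply]
    split
    · rename_i h
      have hhalf : (τ : ℝ) = 1/2 := le_antisymm h hτ
      right
      rw [mem_singleton_iff]
      apply hq1one
      show 2 * (τ:ℝ) = 1
      rw [hhalf]; norm_num
    · left; exact mem_range_self _
  have hγhalf : γ (pr (1/2)) = b := by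
    have h1 : ((pr (1/2) : unitInterval) : ℝ) = 1/2 := hprval _ (by norm_num)
    have := htrans2 (pr (1/2)) (by rw [h1])
    rcases this with h | h
    · rw [hγdef, Path.trans_apply]
      split
      · rename_i hcond
        apply hq1one
        show 2 * ((pr (1/2) : unitInterval):ℝ) = 1
        rw [h1]; norm_num
      · rename_i hcond
        exfalso; apply hcond; rw [h1]
    · exact h
  apply W0 H hHcont hHne h01 h11 hconst
  · intro t ht
    rw [hH0t t]
    apply hW
    apply hq1
    apply htrans1
    rw [hprval t ⟨ht.1, le_trans ht.2 (by norm_num)⟩]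
    exact ht.2
  · intro t ht him
    rw [hH0t t] at him ⊢
    have hmem := htrans2 (pr t) (by rw [hprval t ⟨le_trans (by norm_num) ht.1, ht.2⟩]; exact ht.1)
    rcases hmem with h | h
    · exact hS _ (hq2 h) him
    · exfalso
      rw [mem_singleton_iff] at h
      rw [h] at him
      linarith
  · rw [hH00]; exact ha
  · rw [hH0t (1/2), hγhalf]; exact hb

/-! ### Geometric helper lemmas -/

lemma fin2_cases {i j : Fin 2} (hij : i ≠ j) (k : Fin 2) : k = i ∨ k = j := by
  fin_cases i <;> fin_cases j <;> fin_cases k <;> revert hij <;> decide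

lemma plane_sub_apply (x y : Plane) (k : Fin 2) : (x - y) k = x k - y k := rfl

lemma div_lt_pin {M : ℝ} (hM : 0 < M) {v c : ℤ} (h : (v:ℝ)/M < ((c:ℝ)+1)/M) : v ≤ c := by
  rw [div_lt_div_iff_of_pos_right hM] at h
  have : v < c + 1 := by exact_mod_cast h
  omega

lemma vde_bounds {N : ℕ} (hN : 2 ≤ N) {D : Finset (ℤ × ℤ)} (hD : IsDigitSet N D)
    {d e : ℤ × ℤ} (hd : d ∈ D) (he : e ∈ D) (k : Fin 2) :
    0 ≤ vde N d e k ∧ vde N d e k ≤ (N:ℤ)^2 - 1 := by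
  obtain ⟨h1, h2⟩ := dz_bounds hD hd k
  obtain ⟨h3, h4⟩ := dz_bounds hD he k
  have hNZ : (2:ℤ) ≤ (N:ℤ) := by exact_mod_cast hN
  unfold vde
  constructor
  · positivity
  · nlinarith

lemma mem_trans2 {N : ℕ} (hN : 2 ≤ N) {D : Finset (ℤ × ℤ)} {e : ℤ × ℤ} {x : Plane} :
    x ∈ (fun y => y + emb e) '' approx N D 2 ↔
      ∃ d₀ ∈ D, ∃ e₀ ∈ D, ∀ k, (vde N d₀ e₀ k : ℝ)/(N:ℝ)^2 ≤ x k - (dz e k : ℝ) ∧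
        x k - (dz e k : ℝ) ≤ ((vde N d₀ e₀ k : ℝ)+1)/(N:ℝ)^2 := by
  constructor
  · rintro ⟨z, hz, rfl⟩
    rw [approx2_eq N hN D] at hz
    simp only [mem_iUnion, exists_prop] at hz
    obtain ⟨d₀, hd₀, e₀, he₀, hz⟩ := hz
    refine ⟨d₀, hd₀, e₀, he₀, fun k => ?_⟩
    have hzk := hz k
    have : (z + emb e) k - (dz e k : ℝ) = z k := by
      rw [plane_add_apply, emb_apply]; ring
    rw [this]
    exact hzk
  · rintro ⟨d₀, hd₀, e₀, he₀, hb⟩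
    refine ⟨x - emb e, ?_, by simp⟩
    rw [approx2_eq N hN D]
    simp only [mem_iUnion, exists_prop]
    refine ⟨d₀, hd₀, e₀, he₀, fun k => ?_⟩
    have : (x - emb e) k = x k - (dz e k : ℝ) := by
      rw [plane_sub_apply, emb_apply]
    rw [this]
    exact hb k

lemma trans_sq {N : ℕ} (hN : 2 ≤ N) {D : Finset (ℤ × ℤ)} (hD : IsDigitSet N D)
    {e : ℤ × ℤ} {x : Plane} (hx : x ∈ (fun y => y + emb e) '' approx N D 2) (k : Fin 2) :
    (dz e k : ℝ) ≤ x k ∧ x k ≤ (dz e k : ℝ) + 1 := by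
  obtain ⟨z, hz, rfl⟩ := hx
  have h0 := (mem_unitSq.mp (approx_subset_unitSq hN hD 2 hz)) k
  show (dz e k : ℝ) ≤ (z + emb e) k ∧ (z + emb e) k ≤ (dz e k : ℝ) + 1
  rw [plane_add_apply, emb_apply]
  constructor <;> linarith [h0.1, h0.2]

lemma trans_closed {N : ℕ} (hN : 2 ≤ N) (D : Finset (ℤ × ℤ)) (e : ℤ × ℤ) :
    IsClosed ((fun y => y + emb e) '' approx N D 2) := by
  have : (fun y => y + emb e) '' approx N D 2 = (fun y => y - emb e) ⁻¹' approx N D 2 := by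
    ext x
    constructor
    · rintro ⟨z, hz, rfl⟩
      rw [mem_preimage]
      show z + emb e - emb e ∈ approx N D 2
      rwa [add_sub_cancel_right]
    · intro hx
      rw [mem_preimage] at hx
      exact ⟨x - emb e, hx, by simp⟩
  rw [this]
  exact IsClosed.preimage (continuous_id.sub continuous_const) (approx2_closed hN D)

lemma cplx_re (u v : ℝ) : ((u:ℂ) + (v:ℂ)*Complex.I).re = u := by simp

lemma cplx_im (u v : ℝ) : ((u:ℂ) + (v:ℂ)*Complex.I).im = v := by simp

lemma cplx_cont (f g : Plane → ℝ) (hf : Continuous f) (hg : Continuous g) :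
    Continuous (fun x => ((f x : ℂ) + (g x : ℂ)*Complex.I)) := by
  apply Continuous.add
  · exact Complex.continuous_ofReal.comp hf
  · exact (Complex.continuous_ofReal.comp hg).mul continuous_const

lemma pin_eq {M : ℝ} (hM : 0 < M) {v c : ℤ} {t : ℝ}
    (h1 : (v:ℝ)/M ≤ t) (h2 : t ≤ ((v:ℝ)+1)/M)
    (h3 : (c:ℝ)/M < t) (h4 : t < ((c:ℝ)+1)/M) : v = c := by
  rw [div_le_iff₀ hM] at h1
  rw [le_div_iff₀ hM] at h2
  rw [div_lt_iff₀ hM] at h3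
  rw [lt_div_iff₀ hM] at h4
  have e1 : (v:ℝ) < (c:ℝ)+1 := by nlinarith
  have e2 : (c:ℝ) < (v:ℝ)+1 := by nlinarith
  have f1 : v < c+1 := by exact_mod_cast e1
  have f2 : c < v+1 := by exact_mod_cast e2
  omega


set_option maxHeartbeats 1000000 in
lemma core {N : ℕ} (hN : 2 ≤ N) {D : Finset (ℤ × ℤ)} (hD : IsDigitSet N D)
    (hconn : IsConnected (FS N D)) (h3 : TrivialPi1 (approx N D 3))
    {d d' : ℤ × ℤ} (hd : d ∈ D) (hd' : d' ∈ D)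
    (i j : Fin 2) (hij : i ≠ j)
    (hdi : dz d' i = dz d i + 1) (hdj : dz d' j = dz d j)
    (hmeet : ((fun x => x + emb d) '' approx N D 2 ∩
      (fun x => x + emb d') '' approx N D 2).Nonempty) :
    IsConnected ((fun x => x + emb d) '' approx N D 2 ∩
      (fun x => x + emb d') '' approx N D 2) := by
  have hN0 : (0:ℝ) < N := by positivity
  have hN2 : (0:ℝ) < (N:ℝ)^2 := by positivity
  have hNN : (4:ℝ) ≤ (N:ℝ)^2 := by nlinarith [show (2:ℝ) ≤ N by exact_mod_cast hN]
  set δ : ℝ := ((N:ℝ)^2)⁻¹ with hδdef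
  have hδpos : 0 < δ := by positivity
  have hδle : δ ≤ 1/4 := by
    rw [hδdef]
    rw [inv_le_comm₀ hN2 (by norm_num)]
    linarith
  set Q := approx N D 2 with hQdef
  set U := (fun x => x + emb d) '' Q with hUdef
  set V := (fun x => x + emb d') '' Q with hVdef
  set L : ℝ := (dz d i : ℝ) + 1 with hLdef
  have hLd' : (dz d' i : ℝ) = L := by rw [hdi]; push_cast; ring
  have hLdj : (dz d' j : ℝ) = (dz d j : ℝ) := by rw [hdj]
  -- the line
  set cI : Plane := WithLp.toLp 2 (fun k => if k = i then L else 0 : Fin 2 → ℝ) with hcIdef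
  set wI : Plane := WithLp.toLp 2 (fun k => if k = i then 0 else 1 : Fin 2 → ℝ) with hwIdef
  set ℓ : ℝ → Plane := fun τ => cI + τ • wI with hℓdef
  have hℓi : ∀ τ, ℓ τ i = L := by
    intro τ
    show (cI + τ • wI) i = L
    rw [plane_add_apply, plane_smul_apply]
    show (if i = i then L else 0) + τ * (if i = i then 0 else 1) = L
    rw [if_pos rfl, if_pos rfl]
    ring
  have hℓj : ∀ τ, ℓ τ j = τ := by
    intro τ
    show (cI + τ • wI) j = τ
    rw [plane_add_apply, plane_smul_apply]
    show (if j = i then L else 0) + τ * (if j = i then 0 else 1) = τ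
    rw [if_neg (Ne.symm hij), if_neg (Ne.symm hij)]
    ring
  have hℓcont : Continuous ℓ := continuous_const.add (continuous_id.smul continuous_const)
  set A := U ∩ V with hAdef
  have hAclosed : IsClosed A := (trans_closed hN D d).inter (trans_closed hN D d')
  have hAi : ∀ x ∈ A, x i = L := by
    intro x hx
    have h1 := (trans_sq hN hD hx.1 i).2
    have h2 := (trans_sq hN hD hx.2 i).1
    rw [hLd'] at h2
    rw [hLdef] at *
    linarith
  have hAx : ∀ x ∈ A, x = ℓ (x j) := by
    intro x hx
    apply plane_ext
    intro k
    rcases fin2_cases hij k with rfl | rfl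
    · rw [hℓi, hAi x hx]
    · rw [hℓj]
  set A' : Set ℝ := (fun x : Plane => x j) '' A with hA'def
  have hA'pre : A' = ℓ ⁻¹' A := by
    ext τ
    constructor
    · rintro ⟨x, hx, rfl⟩
      rw [mem_preimage, ← hAx x hx]
      exact hx
    · intro h
      rw [mem_preimage] at h
      exact ⟨ℓ τ, h, hℓj τ⟩
  have hA'closed : IsClosed A' := by
    rw [hA'pre]
    exact hAclosed.preimage hℓcont
  have himg : A = ℓ '' A' := by
    ext x
    constructor
    · intro hx
      exact ⟨x j, ⟨x, hx, rfl⟩, (hAx x hx).symm⟩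
    · rintro ⟨τ, hτ, rfl⟩
      rw [hA'pre, mem_preimage] at hτ
      exact hτ
  refine ⟨hmeet, ?_⟩
  have hgoal : IsPreconnected A' → IsPreconnected A := by
    intro h
    rw [himg]
    exact h.image ℓ hℓcont.continuousOn
  apply hgoal
  rw [isPreconnected_iff_ordConnected, Set.ordConnected_iff]
  intro y₁ h₁ y₂ h₂ hle y₀ hy₀
  by_contra hc
  -- distinguished points of A over y₁, y₂
  obtain ⟨a, haA, haj⟩ := h₁
  obtain ⟨b, hbA, hbj⟩ := h₂
  replace haj : a j = y₁ := haj
  replace hbj : b j = y₂ := hbj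
  have hy₁lt : y₁ < y₀ := by
    rcases lt_or_eq_of_le hy₀.1 with h | h
    · exact h
    · rw [← h] at hc; exact (hc ⟨a, haA, haj⟩).elim
  have hy₂gt : y₀ < y₂ := by
    rcases lt_or_eq_of_le hy₀.2 with h | h
    · exact h
    · rw [h] at hc; exact (hc ⟨b, hbA, hbj⟩).elim
  obtain ⟨ε, hεpos, hεball⟩ := Metric.isOpen_iff.mp hA'closed.isOpen_compl y₀ hc
  set η : ℝ := min (min ε (y₂ - y₀)) δ / 2 with hηdef
  have hηpos : 0 < η := by
    apply div_pos (lt_min (lt_min hεpos (by linarith)) hδpos) two_pos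
  have hmε : min (min ε (y₂ - y₀)) δ ≤ ε := le_trans (min_le_left _ _) (min_le_left _ _)
  have hmy : min (min ε (y₂ - y₀)) δ ≤ y₂ - y₀ := le_trans (min_le_left _ _) (min_le_right _ _)
  have hmδ : min (min ε (y₂ - y₀)) δ ≤ δ := min_le_right _ _
  have hηε : η < ε := by rw [hηdef]; linarith
  have hηy₂ : η < y₂ - y₀ := by rw [hηdef]; linarith
  have hηδ : η ≤ δ/2 := by rw [hηdef]; linarith
  have hcand : ∀ u : ℝ, y₀ < u → u ≤ y₀ + η → (y₁ < u ∧ u < y₂ ∧ u ∉ A') := by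
    intro u hu1 hu2
    refine ⟨by linarith, by linarith, ?_⟩
    apply hεball
    rw [mem_ball, Real.dist_eq, abs_of_pos (by linarith)]
    linarith
  have hN2δ : (N:ℝ)^2 * δ = 1 := by rw [hδdef]; field_simp
  have hgridfree : ∃ u : ℝ, y₁ < u ∧ u < y₂ ∧ u ∉ A' ∧ ∀ m : ℤ, (N:ℝ)^2 * u ≠ (m:ℝ) := by
    by_cases hg : ∃ m : ℤ, (N:ℝ)^2 * (y₀ + η/3) = (m:ℝ)
    · obtain ⟨m, hm⟩ := hg
      obtain ⟨c1, c2, c3⟩ := hcand (y₀ + 2*η/3) (by linarith) (by linarith)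
      refine ⟨y₀ + 2*η/3, c1, c2, c3, ?_⟩
      intro m' hm'
      have hdiff : (m':ℝ) - (m:ℝ) = (N:ℝ)^2 * (η/3) := by rw [← hm', ← hm]; ring
      have hint1 : (0:ℝ) < (m':ℝ) - m := by rw [hdiff]; positivity
      have hint2 : (m':ℝ) - m < 1 := by rw [hdiff]; nlinarith
      have e1 : (0:ℤ) < m' - m := by
        have : (0:ℝ) < ((m' - m : ℤ):ℝ) := by push_cast; linarith
        exact_mod_cast this
      have e2 : (m' - m : ℤ) < 1 := by
        have : ((m' - m : ℤ):ℝ) < 1 := by push_cast; linarith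
        exact_mod_cast this
      omega
    · push_neg at hg
      obtain ⟨c1, c2, c3⟩ := hcand (y₀ + η/3) (by linarith) (by linarith)
      exact ⟨y₀ + η/3, c1, c2, c3, fun m h => hg m h⟩
  obtain ⟨u, hu1, hu2, huA', hugrid⟩ := hgridfree
  set k₀ : ℤ := ⌊(N:ℝ)^2 * u⌋ with hk₀def
  set w₁ : ℝ := (k₀:ℝ)/(N:ℝ)^2 with hw₁def
  set w₂ : ℝ := ((k₀:ℝ)+1)/(N:ℝ)^2 with hw₂def
  have hw₁lt : w₁ < u := by
    have h1 : (k₀:ℝ) ≤ (N:ℝ)^2 * u := Int.floor_le _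
    have h2 : (k₀:ℝ) ≠ (N:ℝ)^2 * u := fun h => hugrid k₀ h.symm
    rw [hw₁def, div_lt_iff₀ hN2]
    rcases lt_of_le_of_ne h1 h2 with h
    linarith
  have hw₂gt : u < w₂ := by
    have h1 := Int.lt_floor_add_one ((N:ℝ)^2 * u)
    rw [hw₂def, lt_div_iff₀ hN2]
    linarith
  set cstar : Plane := ℓ u with hcstardef
  have hcstarA : cstar ∉ A := fun h => huA' ⟨cstar, h, hℓj u⟩
  have hajlo : (dz d j : ℝ) ≤ y₁ := by
    have := (trans_sq hN hD haA.1 j).1; rwa [haj] at this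
  have hbjhi : y₂ ≤ (dz d j : ℝ) + 1 := by
    have := (trans_sq hN hD hbA.1 j).2; rwa [hbj] at this
  have hw₁lo : (dz d j : ℝ) ≤ w₁ := by
    rw [hw₁def, le_div_iff₀ hN2]
    have hint : ((dz d j * (N:ℤ)^2 : ℤ) : ℝ) ≤ (N:ℝ)^2 * u := by push_cast; nlinarith
    have h2 := Int.le_floor.mpr hint
    rw [← hk₀def] at h2
    have h3 : ((dz d j * (N:ℤ)^2 : ℤ) : ℝ) ≤ (k₀:ℝ) := by exact_mod_cast h2
    push_cast at h3
    linarith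
  have hw₂hi : w₂ ≤ (dz d j : ℝ) + 1 := by
    rw [hw₂def, div_le_iff₀ hN2]
    have h1 : ((k₀:ℝ)) ≤ (N:ℝ)^2 * u := Int.floor_le _
    have h2 : (N:ℝ)^2 * u < ((dz d j : ℝ) + 1) * (N:ℝ)^2 := by nlinarith
    have h4 : k₀ < (dz d j + 1) * (N:ℤ)^2 := by
      have : (k₀:ℝ) < (((dz d j + 1) * (N:ℤ)^2 : ℤ):ℝ) := by push_cast; linarith
      exact_mod_cast this
    have h5 : k₀ + 1 ≤ (dz d j + 1) * (N:ℤ)^2 := h4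
    have h6 : ((k₀ + 1 : ℤ):ℝ) ≤ (((dz d j + 1) * (N:ℤ)^2 : ℤ):ℝ) := by exact_mod_cast h5
    push_cast at h6
    linarith
  have hδN2 : δ * (N:ℝ)^2 = 1 := by rw [hδdef]; field_simp
  have hwdiff1 : ∀ c : ℝ, ((k₀:ℝ) - c * (N:ℝ)^2)/(N:ℝ)^2 = w₁ - c := by
    intro c; rw [hw₁def]; field_simp
  have hwdiff2 : ∀ c : ℝ, (((k₀:ℝ) - c * (N:ℝ)^2)+1)/(N:ℝ)^2 = w₂ - c := by
    intro c; rw [hw₂def]; field_simp; ring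
  -- the two pinning facts
  have hpinV : ∀ x, x ∈ V → x i < L + δ → w₁ < x j → x j < w₂ → cstar ∈ V := by
    intro x hxV hxi hxj1 hxj2
    have hxge : L ≤ x i := by
      have h := (trans_sq hN hD hxV i).1; rwa [hLd'] at h
    rw [mem_trans2 hN] at hxV
    obtain ⟨d₀, hd₀, e₀, he₀, hbnd⟩ := hxV
    have hvb := vde_bounds hN hD hd₀ he₀
    have hvi0 : vde N d₀ e₀ i = 0 := by
      have h1 := (hbnd i).1
      have h2 : x i - (dz d' i:ℝ) < δ := by rw [hLd']; linarith
      rw [div_le_iff₀ hN2] at h1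
      have h3 : (vde N d₀ e₀ i : ℝ) < 1 := by nlinarith
      have h4 : vde N d₀ e₀ i < 1 := by exact_mod_cast h3
      have h5 := (hvb i).1
      omega
    have hvj : vde N d₀ e₀ j = k₀ - dz d' j * (N:ℤ)^2 := by
      refine pin_eq hN2 (hbnd j).1 (hbnd j).2 ?_ ?_
      · push_cast
        rw [hwdiff1]
        linarith
      · push_cast
        rw [hwdiff2]
        linarith
    rw [mem_trans2 hN]
    refine ⟨d₀, hd₀, e₀, he₀, fun k => ?_⟩
    rcases fin2_cases hij k with hk | hk
    · rw [hk]
      have hcv : cstar i - (dz d' i : ℝ) = 0 := by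
        rw [hcstardef, hℓi, hLd']; ring
      rw [hcv, hvi0]
      constructor
      · simp
      · positivity
    · rw [hk]
      have hcv : cstar j - (dz d' j : ℝ) = u - (dz d' j : ℝ) := by rw [hcstardef, hℓj]
      rw [hcv, hvj]
      push_cast
      rw [hwdiff1, hwdiff2]
      constructor <;> linarith
  have hpinU : ∀ x, x ∈ U → L - δ < x i → w₁ < x j → x j < w₂ → cstar ∈ U := by
    intro x hxU hxi hxj1 hxj2
    have hxle : x i ≤ L := by
      have h := (trans_sq hN hD hxU i).2
      rw [hLdef]
      exact h
    rw [mem_trans2 hN] at hxU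
    obtain ⟨d₀, hd₀, e₀, he₀, hbnd⟩ := hxU
    have hvb := vde_bounds hN hD hd₀ he₀
    have hvi0 : vde N d₀ e₀ i = (N:ℤ)^2 - 1 := by
      have h1 := (hbnd i).2
      have h2 : 1 - δ < x i - (dz d i:ℝ) := by rw [hLdef] at hxi; linarith
      rw [le_div_iff₀ hN2] at h1
      have h3 : ((N:ℝ)^2 - 1) - 1 < (vde N d₀ e₀ i : ℝ) := by nlinarith
      have h4 : ((N:ℤ)^2 : ℤ) - 2 < vde N d₀ e₀ i := by
        have hcast : (((N:ℤ)^2 - 2 : ℤ):ℝ) < (vde N d₀ e₀ i : ℝ) := by push_cast; linarith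
        exact_mod_cast hcast
      have h5 := (hvb i).2
      omega
    have hvj : vde N d₀ e₀ j = k₀ - dz d j * (N:ℤ)^2 := by
      refine pin_eq hN2 (hbnd j).1 (hbnd j).2 ?_ ?_
      · push_cast
        rw [hwdiff1]
        linarith
      · push_cast
        rw [hwdiff2]
        linarith
    rw [mem_trans2 hN]
    refine ⟨d₀, hd₀, e₀, he₀, fun k => ?_⟩
    rcases fin2_cases hij k with hk | hk
    · rw [hk]
      have hcv : cstar i - (dz d i : ℝ) = 1 := by
        rw [hcstardef, hℓi, hLdef]; ring
      rw [hcv, hvi0]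
      push_cast
      constructor
      · rw [div_le_iff₀ hN2]; linarith
      · rw [le_div_iff₀ hN2]; linarith
    · rw [hk]
      have hcv : cstar j - (dz d j : ℝ) = u - (dz d j : ℝ) := by rw [hcstardef, hℓj]
      rw [hcv, hvj]
      push_cast
      rw [hwdiff1, hwdiff2]
      constructor <;> linarith
  -- paths inside the two squares
  have hjoinU : JoinedIn U a b := by
    obtain ⟨za, hza, hzaeq⟩ := haA.1
    obtain ⟨zb, hzb, hzbeq⟩ := hbA.1
    have hj := (approx2_joinedIn hN hD hconn hza hzb).map
      (f := fun x => x + emb d) (continuous_id.add continuous_const)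
    rw [← hzaeq, ← hzbeq]
    exact hj
  have hjoinV : JoinedIn V b a := by
    obtain ⟨za, hza, hzaeq⟩ := haA.2
    obtain ⟨zb, hzb, hzbeq⟩ := hbA.2
    have hj := (approx2_joinedIn hN hD hconn hzb hza).map
      (f := fun x => x + emb d') (continuous_id.add continuous_const)
    rw [← hzaeq, ← hzbeq]
    exact hj
  have hscale : ∀ x ∈ U ∪ V, (N:ℝ)⁻¹ • x ∈ approx N D 3 := by
    rintro x (⟨z, hz, rfl⟩ | ⟨z, hz, rfl⟩)
    · rw [mem_approx_succ]; exact ⟨d, hd, z, hz, rfl⟩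
    · rw [mem_approx_succ]; exact ⟨d', hd', z, hz, rfl⟩
  have hsqueeze : ∀ (m : ℤ) (r : ℝ), (m:ℝ) ≤ r → r ≤ (m:ℝ)+1 →
      ∀ (c:ℤ), (c:ℝ) < r → r < (c:ℝ)+1 → m = c := by
    intro m r h1 h2 c h3 h4
    have e1 : (m:ℝ) < (c:ℝ)+1 := lt_of_le_of_lt h1 h4
    have e2 : (c:ℝ) < (m:ℝ)+1 := lt_of_lt_of_le h3 h2
    have f1 : m < c+1 := by exact_mod_cast e1
    have f2 : c < m+1 := by exact_mod_cast e2
    omega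
  have hpinE : ∀ e ∈ D, ∀ x, x ∈ (fun w => w + emb e) '' Q →
      ∀ (ci cj : ℤ), ((ci:ℝ) < x i) → (x i < (ci:ℝ)+1) → ((cj:ℝ) < x j) →
      (x j < (cj:ℝ)+1) → dz e i = ci ∧ dz e j = cj := by
    intro e he x hx ci cj h1 h2 h3 h4
    have hsq1 := trans_sq hN hD hx i
    have hsq2 := trans_sq hN hD hx j
    exact ⟨hsqueeze _ _ hsq1.1 hsq1.2 _ h1 h2, hsqueeze _ _ hsq2.1 hsq2.2 _ h3 h4⟩
  have hdz_ext : ∀ e f : ℤ×ℤ, dz e i = dz f i → dz e j = dz f j → e = f := by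
    intro e f h1 h2
    have hall : ∀ k, dz e k = dz f k := by
      intro k
      rcases fin2_cases hij k with hk | hk
      · rw [hk]; exact h1
      · rw [hk]; exact h2
    have ha0 := hall 0
    have ha1 := hall 1
    simp [dz] at ha0 ha1
    exact Prod.ext ha0 ha1
  have hujlo : (dz d j : ℝ) < u := lt_of_le_of_lt hw₁lo hw₁lt
  have hujhi : u < (dz d j : ℝ) + 1 := lt_of_lt_of_le hw₂gt hw₂hi
  have hsplit : cstar ∉ U ∨ cstar ∉ V := by
    by_contra h
    push_neg at h
    exact hcstarA ⟨h.1, h.2⟩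
  rcases hsplit with hcU | hcV
  · -- cstar ∉ U : halfplane side is V, slit side is U
    set φ : Plane → ℂ :=
      fun x => (((L - δ/2) - x i : ℝ):ℂ) + ((x j - u : ℝ):ℂ)*Complex.I with hφdef
    have hφcont : Continuous φ :=
      cplx_cont _ _ (continuous_const.sub (continuous_planeProj i))
        ((continuous_planeProj j).sub continuous_const)
    have hφre : ∀ x : Plane, (φ x).re = (L - δ/2) - x i := fun x => cplx_re _ _
    have hφim : ∀ x : Plane, (φ x).im = x j - u := fun x => cplx_im _ _
    have hW : ∀ x ∈ V, (φ x).re < 0 := by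
      intro x hx
      have h := (trans_sq hN hD hx i).1
      rw [hLd'] at h
      rw [hφre]
      linarith
    have hS : ∀ x ∈ U, (φ x).im = 0 → 0 < (φ x).re := by
      intro x hx him
      rw [hφim] at him
      have hxj : x j = u := by linarith
      have hxi : ¬ (L - δ < x i) := by
        intro hlt
        exact hcU (hpinU x hx hlt (by rw [hxj]; exact hw₁lt) (by rw [hxj]; exact hw₂gt))
      push_neg at hxi
      rw [hφre]
      linarith
    have hφ0 : ∀ y ∈ approx N D 3, φ ((N:ℝ) • y) ≠ 0 := by
      intro y hy heq
      rw [mem_approx_succ] at hy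
      obtain ⟨e, he, z, hz, hzeq⟩ := hy
      have hNz : (N:ℝ) • y = z + emb e := by
        rw [← hzeq, smul_inv_smul₀ (ne_of_gt hN0)]
      have hmem : (N:ℝ) • y ∈ (fun w => w + emb e) '' Q := ⟨z, hz, hNz.symm⟩
      have hre : ((N:ℝ) • y) i = L - δ/2 := by
        have h := congrArg Complex.re heq
        rw [hφre, Complex.zero_re] at h
        linarith
      have him : ((N:ℝ) • y) j = u := by
        have h := congrArg Complex.im heq
        rw [hφim, Complex.zero_im] at h
        linarith
      have hpins := hpinE e he _ hmem (dz d i) (dz d j)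
        (by rw [hre, hLdef]; linarith)
        (by rw [hre, hLdef]; linarith)
        (by rw [him]; exact hujlo)
        (by rw [him]; exact hujhi)
      have hed : e = d := hdz_ext e d hpins.1 hpins.2
      rw [hed] at hmem
      apply hcU
      apply hpinU _ hmem
      · rw [hre]; linarith
      · rw [him]; exact hw₁lt
      · rw [him]; exact hw₂gt
    have hscale' : ∀ x ∈ V ∪ U, (N:ℝ)⁻¹ • x ∈ approx N D 3 := by
      rintro x (h | h)
      · exact hscale x (Or.inr h)
      · exact hscale x (Or.inl h)
    refine core2 hN h3 hscale' (hjoinV.symm.somePath) ?_ (hjoinU.symm.somePath) ?_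
      φ hφcont hφ0 hW hS ?_ ?_
    · rintro _ ⟨t, rfl⟩
      exact (hjoinV.symm).somePath_mem t
    · rintro _ ⟨t, rfl⟩
      exact (hjoinU.symm).somePath_mem t
    · rw [hφim, haj]; linarith
    · rw [hφim, hbj]; linarith
  · -- cstar ∉ V : halfplane side is U, slit side is V
    set φ : Plane → ℂ :=
      fun x => ((x i - (L + δ/2) : ℝ):ℂ) + ((x j - u : ℝ):ℂ)*Complex.I with hφdef
    have hφcont : Continuous φ :=
      cplx_cont _ _ ((continuous_planeProj i).sub continuous_const)
        ((continuous_planeProj j).sub continuous_const)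
    have hφre : ∀ x : Plane, (φ x).re = x i - (L + δ/2) := fun x => cplx_re _ _
    have hφim : ∀ x : Plane, (φ x).im = x j - u := fun x => cplx_im _ _
    have hW : ∀ x ∈ U, (φ x).re < 0 := by
      intro x hx
      have h := (trans_sq hN hD hx i).2
      rw [hφre, hLdef]
      rw [hLdef] at *
      linarith
    have hS : ∀ x ∈ V, (φ x).im = 0 → 0 < (φ x).re := by
      intro x hx him
      rw [hφim] at him
      have hxj : x j = u := by linarith
      have hxi : ¬ (x i < L + δ) := by
        intro hlt
        exact hcV (hpinV x hx hlt (by rw [hxj]; exact hw₁lt) (by rw [hxj]; exact hw₂gt))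
      push_neg at hxi
      rw [hφre]
      linarith
    have hφ0 : ∀ y ∈ approx N D 3, φ ((N:ℝ) • y) ≠ 0 := by
      intro y hy heq
      rw [mem_approx_succ] at hy
      obtain ⟨e, he, z, hz, hzeq⟩ := hy
      have hNz : (N:ℝ) • y = z + emb e := by
        rw [← hzeq, smul_inv_smul₀ (ne_of_gt hN0)]
      have hmem : (N:ℝ) • y ∈ (fun w => w + emb e) '' Q := ⟨z, hz, hNz.symm⟩
      have hre : ((N:ℝ) • y) i = L + δ/2 := by
        have h := congrArg Complex.re heq
        rw [hφre, Complex.zero_re] at h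
        linarith
      have him : ((N:ℝ) • y) j = u := by
        have h := congrArg Complex.im heq
        rw [hφim, Complex.zero_im] at h
        linarith
      have hpins := hpinE e he _ hmem (dz d' i) (dz d' j)
        (by rw [hre, hLd']; linarith)
        (by rw [hre, hLd']; linarith)
        (by rw [him, hLdj]; exact hujlo)
        (by rw [him, hLdj]; exact hujhi)
      have hed : e = d' := hdz_ext e d' hpins.1 hpins.2
      rw [hed] at hmem
      apply hcV
      apply hpinV _ hmem
      · rw [hre]; linarith
      · rw [him]; exact hw₁lt
      · rw [him]; exact hw₂gt
    refine core2 hN h3 hscale (hjoinU.somePath) ?_ (hjoinV.somePath) ?_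
      φ hφcont hφ0 hW ?_ ?_ ?_
    · rintro _ ⟨t, rfl⟩
      exact hjoinU.somePath_mem t
    · rintro _ ⟨t, rfl⟩
      exact hjoinV.somePath_mem t
    · exact hS
    · rw [hφim, haj]; linarith
    · rw [hφim, hbj]; linarith

lemma dz0 (d : ℤ × ℤ) : dz d 0 = d.1 := rfl

lemma dz1 (d : ℤ × ℤ) : dz d 1 = d.2 := rfl


/-- For a connected fractal square with `D ≠ {0,…,N−1}²` and trivial loops in
`K⁽²⁾` and `K⁽³⁾`: for distinct `d, d' ∈ D`, if `(K⁽²⁾ + d) ∩ (K⁽²⁾ + d')` is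
nonempty then it is connected. -/
theorem stmt8 (N : ℕ) (hN : 2 ≤ N) (D : Finset (ℤ × ℤ)) (hD : IsDigitSet N D)
    (hconn : IsConnected (FS N D))
    (hDne : ∃ d : ℤ × ℤ,
      (0 ≤ d.1 ∧ d.1 ≤ (N : ℤ) - 1 ∧ 0 ≤ d.2 ∧ d.2 ≤ (N : ℤ) - 1) ∧ d ∉ D)
    (h2 : TrivialPi1 (approx N D 2)) (h3 : TrivialPi1 (approx N D 3))
    (d d' : ℤ × ℤ) (hd : d ∈ D) (hd' : d' ∈ D) (hne : d ≠ d')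
    (hmeet : ((fun x => x + emb d) '' approx N D 2 ∩
      (fun x => x + emb d') '' approx N D 2).Nonempty) :
    IsConnected ((fun x => x + emb d) '' approx N D 2 ∩
      (fun x => x + emb d') '' approx N D 2) := by
  have hxe := hmeet
  obtain ⟨x, hx⟩ := hxe
  have hb : ∀ k, (dz d' k ≤ dz d k + 1) ∧ (dz d k ≤ dz d' k + 1) := by
    intro k
    have h1 := trans_sq hN hD hx.1 k
    have h2 := trans_sq hN hD hx.2 k
    constructor
    · have h : (dz d' k : ℝ) ≤ (dz d k : ℝ) + 1 := by linarith [h1.2, h2.1]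
      exact_mod_cast h
    · have h : (dz d k : ℝ) ≤ (dz d' k : ℝ) + 1 := by linarith [h1.1, h2.2]
      exact_mod_cast h
  have hb0 := hb 0
  have hb1 := hb 1
  rw [dz0, dz0] at hb0
  rw [dz1, dz1] at hb1
  have hmeet' : ((fun x => x + emb d') '' approx N D 2 ∩
      (fun x => x + emb d) '' approx N D 2).Nonempty := by rwa [inter_comm] at hmeet
  have cornerCase : (d'.1 = d.1 + 1 ∨ d.1 = d'.1 + 1) → (d'.2 = d.2 + 1 ∨ d.2 = d'.2 + 1) →
      IsConnected ((fun x => x + emb d) '' approx N D 2 ∩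
        (fun x => x + emb d') '' approx N D 2) := by
    intro hk1 hk2
    refine ⟨hmeet, Set.Subsingleton.isPreconnected ?_⟩
    have forced : ∀ (k : Fin 2), (dz d' k = dz d k + 1 ∨ dz d k = dz d' k + 1) →
        ∀ z, z ∈ ((fun x => x + emb d) '' approx N D 2 ∩
          (fun x => x + emb d') '' approx N D 2) →
        ∀ y, y ∈ ((fun x => x + emb d) '' approx N D 2 ∩
          (fun x => x + emb d') '' approx N D 2) → z k = y k := by
      intro k hk z hz y hy
      have h1 := trans_sq hN hD hz.1 k
      have h2 := trans_sq hN hD hz.2 k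
      have h3 := trans_sq hN hD hy.1 k
      have h4 := trans_sq hN hD hy.2 k
      rcases hk with h | h
      · have hc : (dz d' k : ℝ) = (dz d k : ℝ) + 1 := by exact_mod_cast h
        linarith [h1.2, h2.1, h3.2, h4.1]
      · have hc : (dz d k : ℝ) = (dz d' k : ℝ) + 1 := by exact_mod_cast h
        linarith [h1.1, h2.2, h3.1, h4.2]
    intro z hz y hy
    apply plane_ext
    intro k
    rcases fin2_cases (show (0:Fin 2) ≠ 1 by decide) k with hk | hk
    · rw [hk]
      exact forced 0 (by rw [dz0, dz0]; exact hk1) z hz y hy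
    · rw [hk]
      exact forced 1 (by rw [dz1, dz1]; exact hk2) z hz y hy
  rcases (by omega : d'.1 = d.1 + 1 ∨ d.1 = d'.1 + 1 ∨ d'.1 = d.1) with h1 | h1 | h1 <;>
    rcases (by omega : d'.2 = d.2 + 1 ∨ d.2 = d'.2 + 1 ∨ d'.2 = d.2) with hh2 | hh2 | hh2
  · exact cornerCase (Or.inl h1) (Or.inl hh2)
  · exact cornerCase (Or.inl h1) (Or.inr hh2)
  · exact core hN hD hconn h3 hd hd' 0 1 (by decide)
      (by rw [dz0, dz0]; exact h1) (by rw [dz1, dz1]; exact hh2) hmeet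
  · exact cornerCase (Or.inr h1) (Or.inl hh2)
  · exact cornerCase (Or.inr h1) (Or.inr hh2)
  · rw [inter_comm]
    exact core hN hD hconn h3 hd' hd 0 1 (by decide)
      (by rw [dz0, dz0]; exact h1) (by rw [dz1, dz1]; exact hh2.symm) hmeet'
  · exact core hN hD hconn h3 hd hd' 1 0 (by decide)
      (by rw [dz1, dz1]; exact hh2) (by rw [dz0, dz0]; exact h1) hmeet
  · rw [inter_comm]
    exact core hN hD hconn h3 hd' hd 1 0 (by decide)
      (by rw [dz1, dz1]; exact hh2) (by rw [dz0, dz0]; exact h1.symm) hmeet'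
  · exact absurd (Prod.ext h1.symm hh2.symm) hne
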